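/- With d: F_2 → ℤ as defined via normal forms, for all u, v ∈ F_2 we have d(uv) − d(vu) = e_α(u)·e_β(v) − e_α(v)·e_β(u). -/

import Mathlib

/-- sign of a `Bool` exponent: `true ↦ 1`, `false ↦ -1`. -/
def sgn (b : Bool) : ℤ := if b then 1 else -1

/-- Auxiliary computation of Morita's function `d` on a (reduced) word in the
free group on two generators (`false` = α, `true` = β), keeping a running
sum `acc` of the α-exponents read so far.  Each letter `β^{δ}` contributes
`δ * acc`. -/
def dWord : List (Bool × Bool) → ℤ → ℤ
  | [], _ => 0
  | (g, s) :: rest, acc =>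
      if g then sgn s * acc + dWord rest acc
      else dWord rest (acc + sgn s)

/-- Morita's function `d : F₂ → ℤ`, defined on the normal form
`α^{ε_1}β^{δ_1}⋯α^{ε_n}β^{δ_n}` by `d = Σ_i δ_i (ε_1 + ⋯ + ε_i)`,
computed here from the reduced word. -/
def moritaD (w : FreeGroup Bool) : ℤ := dWord w.toWord 0

/-- Exponent sum of the generator `g` in the word `w`. -/
def expSum (g : Bool) (w : FreeGroup Bool) : ℤ :=
  (w.toWord.map fun p => if p.1 = g then sgn p.2 else 0).sum

/-- The generator α of F₂. -/
def genα : FreeGroup Bool := FreeGroup.of false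

/-- The generator β of F₂. -/
def genβ : FreeGroup Bool := FreeGroup.of true

/-!
`d` is computed by a left-to-right scan of a word, which makes sense on arbitrary (unreduced)
words. On words it is additive up to the cross term `e_α(L₁)·e_β(L₂)`, and it is unchanged by
cancelling a pair `x x⁻¹`, since the two letters contribute opposite amounts. Hence
`d(uv) = d(u) + d(v) + e_α(u)·e_β(v)`, and the cross terms give the commutator formula.
-/

def wordExpSum (g : Bool) (L : List (Bool × Bool)) : ℤ :=
  (L.map fun p => if p.1 = g then sgn p.2 else 0).sum

theorem sgn_not (b : Bool) : sgn (!b) = -sgn b := by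
  cases b <;> rfl

theorem dWord_eq_dWord_zero_add (L : List (Bool × Bool)) (acc : ℤ) :
    dWord L acc = dWord L 0 + acc * wordExpSum true L := by
  induction L generalizing acc with
  | nil => simp [dWord, wordExpSum]
  | cons p rest ih =>
    obtain ⟨_ | _, s⟩ := p
    · simp only [dWord, zero_add]
      rw [ih (acc + sgn s), ih (sgn s)]
      simp only [wordExpSum, List.map_cons, List.sum_cons, Bool.false_eq_true, if_false]
      ring
    · simp only [dWord, if_true]
      rw [ih]
      simp only [wordExpSum, List.map_cons, List.sum_cons, if_true]
      ring

theorem dWord_append (L₁ L₂ : List (Bool × Bool)) (acc : ℤ) :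
    dWord (L₁ ++ L₂) acc = dWord L₁ acc + dWord L₂ (acc + wordExpSum false L₁) := by
  induction L₁ generalizing acc with
  | nil => simp [dWord, wordExpSum]
  | cons p rest ih =>
    obtain ⟨_ | _, s⟩ := p <;>
      simp only [List.cons_append, dWord, Bool.false_eq_true, Bool.true_eq_false, if_false,
        if_true, ih, wordExpSum, List.map_cons, List.sum_cons] <;>
      ring_nf

theorem dWord_eq_of_step {L L' : List (Bool × Bool)} (h : FreeGroup.Red.Step L L') (acc : ℤ) :
    dWord L acc = dWord L' acc := by
  obtain @⟨_, _, x, _⟩ := h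
  rw [dWord_append, dWord_append]
  congr 1
  cases x <;> simp only [dWord, Bool.false_eq_true, if_false, if_true, sgn_not]
  · congr 1; ring
  · ring

theorem dWord_eq_of_red {L L' : List (Bool × Bool)} (h : FreeGroup.Red L L') (acc : ℤ) :
    dWord L acc = dWord L' acc := by
  induction h with
  | refl => rfl
  | tail _ step ih => rw [ih, dWord_eq_of_step step]

theorem moritaD_mul (u v : FreeGroup Bool) :
    moritaD (u * v) = moritaD u + moritaD v + expSum false u * expSum true v := by
  rw [moritaD, FreeGroup.toWord_mul, ← dWord_eq_of_red FreeGroup.reduce.red, dWord_append,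
    dWord_eq_dWord_zero_add v.toWord, zero_add, ← add_assoc]
  rfl

/-- For all `u, v ∈ F₂`,
`d(uv) − d(vu) = e_α(u)·e_β(v) − e_α(v)·e_β(u)`. -/
theorem morita_d_comm (u v : FreeGroup Bool) :
    moritaD (u * v) - moritaD (v * u)
      = expSum false u * expSum true v - expSum false v * expSum true u := by
  rw [moritaD_mul, moritaD_mul]
  ring
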